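/- Let d ≥ 2, s₁, s₂ ∈ ℝ, 0 < p₁, p₂ < ∞, 0 < q₁ ≤ ∞ and α ∈ ℝ. (i) If there exists C′ > 0 such that ‖ Σ_{P∈Γ} |Q_P|^{s₂ − 1/p₂ + 1/2} e_P ‖_{f^{s₁,q₁}_{p₁}(AB)} ≤ C′ ( ν_{α − p₁(d−1)/(q₁(d+1))}(Γ) )^{1/p₁} for every finite Γ ⊂ 𝒬_AB, then α ≤ p₁(s₂ − 1/p₂ − s₁ + 1/p₁) + p₁(d−1)/(q₁(d+1)). (ii) If there exists C > 0 such that C ( ν_{α + (d−1)/(d+1)}(Γ) )^{1/p₁} ≤ ‖ Σ_{P∈Γ} |Q_P|^{s₂ − 1/p₂ + 1/2} e_P ‖_{f^{s₁,q₁}_{p₁}(AB)} for every finite Γ ⊂ 𝒬_AB, then α ≥ p₁(s₂ − 1/p₂ − s₁ + 1/p₁) − (d−1)/(d+1). -/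

import Mathlib

open scoped ENNReal NNReal
open MeasureTheory

namespace Shear

/-- Index set `𝒬_AB` of the shearlet system: direction, scale, shear, translation. -/
structure Index (d : ℕ) where
  dir : Fin d
  j : ℕ
  l : Fin (d - 1) → ℤ
  k : Fin d → ℤ
  hl : ∀ i, |l i| ≤ 2 ^ j

/-- Lebesgue measure of the anisotropic cube `Q_P`, namely `2^{-j(d+1)}`. -/
noncomputable def cubeVol {d : ℕ} (P : Index d) : ℝ := (2 : ℝ) ^ (-(P.j : ℤ) * (d + 1))

/-- The inverse anisotropic dilation `A_(𝔡)^{-j}`. -/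
noncomputable def shearAinv (d : ℕ) (𝔡 : Fin d) (j : ℕ) : Matrix (Fin d) (Fin d) ℝ :=
  Matrix.diagonal fun i => if i = 𝔡 then (4 : ℝ) ^ (-(j : ℤ)) else (2 : ℝ) ^ (-(j : ℤ))

/-- The shear matrix `B_(𝔡)^{[ℓ]}`. -/
noncomputable def shearB (d : ℕ) (𝔡 : Fin d) (l : Fin (d - 1) → ℤ) : Matrix (Fin d) (Fin d) ℝ :=
  fun i c =>
    if hic : i = c then 1
    else if hi : i = 𝔡 then
      (if hc : (c : ℕ) < (𝔡 : ℕ) then (l ⟨c, by have := 𝔡.isLt; omega⟩ : ℝ)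
       else (l ⟨(c : ℕ) - 1, by
          have h1 : (𝔡 : ℕ) ≠ (c : ℕ) := fun h => hic (hi.trans (Fin.ext h))
          have := c.isLt; have := 𝔡.isLt; omega⟩ : ℝ))
    else 0

/-- The anisotropic cube `Q_P = A_(𝔡)^{-j} B_(𝔡)^{[-ℓ]} ([0,1)^d + k)`. -/
noncomputable def shearQ {d : ℕ} (P : Index d) : Set (Fin d → ℝ) :=
  (fun y => (shearAinv d P.dir P.j * shearB d P.dir fun i => -P.l i).mulVec y) ''
    {y : Fin d → ℝ | ∀ i, (P.k i : ℝ) ≤ y i ∧ y i < (P.k i : ℝ) + 1}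

/-- The measure `ν_β(Γ) = Σ_{P ∈ Γ} |Q_P|^β`. -/
noncomputable def nu {d : ℕ} (β : ℝ) (Γ : Set (Index d)) : ℝ≥0∞ :=
  ∑' P : Γ, ENNReal.ofReal (cubeVol (P : Index d) ^ β)

/-- The quasi-norm of the shear anisotropic inhomogeneous Besov sequence space `b^{s,q}_p(AB)`
(finite integrability parameters). -/
noncomputable def besovNorm {d : ℕ} (s p q : ℝ) (c : Index d → ℂ) : ℝ≥0∞ :=
  (∑' (𝔡 : Fin d) (j : ℕ) (l : {l : Fin (d - 1) → ℤ // ∀ i, |l i| ≤ 2 ^ j}),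
      (∑' k : Fin d → ℤ,
          (ENNReal.ofReal (((2 : ℝ) ^ (-(j : ℤ) * (d + 1))) ^ (-s + 1 / p - 1 / 2)) *
              (‖c ⟨𝔡, j, l.1, k, l.2⟩‖₊ : ℝ≥0∞)) ^ p) ^ (q / p)) ^ (1 / q)

/-- The quasi-norm of the shear anisotropic inhomogeneous Triebel–Lizorkin sequence space
`f^{s,q}_p(AB)`, `0 < q ≤ ∞`. -/
noncomputable def tlNorm {d : ℕ} (s p : ℝ) (q : ℝ≥0∞) (c : Index d → ℂ) : ℝ≥0∞ :=
  (∫⁻ x : Fin d → ℝ,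
      (if q = ∞ then
          ⨆ P : Index d,
            ENNReal.ofReal (cubeVol P ^ (-s - 1 / 2)) * (‖c P‖₊ : ℝ≥0∞) *
              (shearQ P).indicator (fun _ => (1 : ℝ≥0∞)) x
        else
          (∑' P : Index d,
              (ENNReal.ofReal (cubeVol P ^ (-s - 1 / 2)) * (‖c P‖₊ : ℝ≥0∞) *
                  (shearQ P).indicator (fun _ => (1 : ℝ≥0∞)) x) ^ q.toReal) ^ (1 / q.toReal)) ^ p)
    ^ (1 / p)

/-- Non-increasing rearrangement of a sequence with respect to a (set-function) measure `ν`. -/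
noncomputable def rearr {D : Type*} (ν : Set D → ℝ≥0∞) (c : D → ℂ) (t : ℝ≥0∞) : ℝ≥0∞ :=
  sInf {lam : ℝ≥0∞ | ν {I | lam < (‖c I‖₊ : ℝ≥0∞)} ≤ t}

/-- Quasi-norm of the weighted discrete Lorentz space `ℓ^{p,μ}(u,ν)`. -/
noncomputable def lorentzNorm {D : Type*} (ν : Set D → ℝ≥0∞) (u : D → ℝ) (p : ℝ) (μ : ℝ≥0∞)
    (c : D → ℂ) : ℝ≥0∞ :=
  if μ = ∞ then
    ⨆ t : {t : ℝ // 0 < t},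
      ENNReal.ofReal (t.1 ^ (1 / p)) * rearr ν (fun I => (u I : ℂ) * c I) (ENNReal.ofReal t.1)
  else
    (∫⁻ t in Set.Ioi (0 : ℝ),
        (ENNReal.ofReal (t ^ (1 / p)) *
              rearr ν (fun I => (u I : ℂ) * c I) (ENNReal.ofReal t)) ^ μ.toReal /
          ENNReal.ofReal t) ^ (1 / μ.toReal)

/-- `Σ_{t,ν}`: sequences supported on a set `Γ` with `ν(Γ) ≤ t`. -/
def SigmaSet {D : Type*} (ν : Set D → ℝ≥0∞) (t : ℝ≥0∞) : Set (D → ℂ) :=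
  {c | ∃ Γ : Set D, ν Γ ≤ t ∧ ∀ P ∉ Γ, c P = 0}

/-- Restricted approximation error `σ_ν(t,s)_𝔣`. -/
noncomputable def approxErr {D : Type*} (F : (D → ℂ) → ℝ≥0∞) (ν : Set D → ℝ≥0∞) (t : ℝ≥0∞)
    (s : D → ℂ) : ℝ≥0∞ :=
  ⨅ c ∈ SigmaSet ν t, F (fun P => s P - c P)

/-- Quasi-norm of the restricted approximation space `A^ξ_μ(𝔣,ν)`. -/
noncomputable def approxNorm {D : Type*} (F : (D → ℂ) → ℝ≥0∞) (ν : Set D → ℝ≥0∞) (ξ : ℝ)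
    (μ : ℝ≥0∞) (s : D → ℂ) : ℝ≥0∞ :=
  if μ = ∞ then
    ⨆ t : {t : ℝ // 0 < t}, ENNReal.ofReal (t.1 ^ ξ) * approxErr F ν (ENNReal.ofReal t.1) s
  else
    (∫⁻ t in Set.Ioi (0 : ℝ),
        (ENNReal.ofReal (t ^ ξ) * approxErr F ν (ENNReal.ofReal t) s) ^ μ.toReal /
          ENNReal.ofReal t) ^ (1 / μ.toReal)

/-- Peetre `K`-functional for a couple of quasi-normed sequence spaces. -/
noncomputable def Kfun {D : Type*} (X Y : (D → ℂ) → ℝ≥0∞) (t : ℝ≥0∞) (s : D → ℂ) : ℝ≥0∞ :=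
  ⨅ a : D → ℂ, X a + t * Y (fun P => s P - a P)

/-- Quasi-norm of the real interpolation space `(X,Y)_{θ,q}`. -/
noncomputable def interpNorm {D : Type*} (X Y : (D → ℂ) → ℝ≥0∞) (θ : ℝ) (q : ℝ≥0∞)
    (s : D → ℂ) : ℝ≥0∞ :=
  if q = ∞ then
    ⨆ t : {t : ℝ // 0 < t}, ENNReal.ofReal (t.1 ^ (-θ)) * Kfun X Y (ENNReal.ofReal t.1) s
  else
    (∫⁻ t in Set.Ioi (0 : ℝ),
        (ENNReal.ofReal (t ^ (-θ)) * Kfun X Y (ENNReal.ofReal t) s) ^ q.toReal /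
          ENNReal.ofReal t) ^ (1 / q.toReal)

end Shear

/-! Tested on a single index `P` of scale `j`, both inequalities become comparisons of powers of
`|Q_P| = 2^{-j(d+1)}`: the `f`-norm of `|Q_P|^{s₂-1/p₂+1/2} e_P` is `|Q_P|^{s₂-1/p₂-s₁+1/p₁}`,
while `ν_β({P})^{1/p₁} = |Q_P|^{β/p₁}`. As `j → ∞`, `|Q_P| → 0`, and a bound
`|Q_P|^a ≤ C |Q_P|^b` along such a sequence forces `b ≤ a`. -/

open Filter Topology

theorem le_of_forall_rpow_le_mul_rpow {ι : Type*} {l : Filter ι} [l.NeBot] {x : ι → ℝ}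
    (hx0 : ∀ i, 0 < x i) (hx : Tendsto x l (𝓝 0)) {a b C : ℝ}
    (h : ∀ i, x i ^ a ≤ C * x i ^ b) : b ≤ a := by
  by_contra! hab
  have hlim : Tendsto (fun i => C * x i ^ (b - a)) l (𝓝 0) := by
    simpa [Real.zero_rpow (sub_pos.2 hab).ne'] using
      (hx.rpow_const (Or.inr (sub_pos.2 hab).le)).const_mul C
  have hge : ∀ i, 1 ≤ C * x i ^ (b - a) := fun i => by
    rw [Real.rpow_sub (hx0 i), mul_div_assoc', le_div_iff₀ (Real.rpow_pos_of_pos (hx0 i) a),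
      one_mul]
    exact h i
  exact absurd (ge_of_tendsto' hlim hge) (by norm_num)

namespace Shear

variable {d : ℕ}

theorem det_shearB (𝔡 : Fin d) (l : Fin (d - 1) → ℤ) : (shearB d 𝔡 l).det = 1 := by
  set w : Fin d → ℝ := shearB d 𝔡 l 𝔡 - Pi.single 𝔡 1
  have hB : shearB d 𝔡 l =
      1 + Matrix.replicateCol Unit (Pi.single 𝔡 (1 : ℝ)) * Matrix.replicateRow Unit w := by
    ext i c
    simp only [Matrix.add_apply, Matrix.mul_apply, Matrix.replicateCol_apply,
      Matrix.replicateRow_apply, Finset.univ_unique, Finset.sum_singleton, w]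
    by_cases hi : i = 𝔡
    · subst hi
      by_cases hic : i = c
      · subst hic; simp [shearB]
      · simp [Matrix.one_apply_ne hic, Pi.single_eq_of_ne (Ne.symm hic)]
    · by_cases hic : i = c
      · subst hic; simp [shearB, hi]
      · simp [shearB, hi, hic]
  rw [hB, Matrix.det_one_add_replicateCol_mul_replicateRow]
  simp [w, shearB]

theorem det_shearAinv (𝔡 : Fin d) (j : ℕ) :
    (shearAinv d 𝔡 j).det = (2 : ℝ) ^ (-(j : ℤ) * (d + 1)) := by
  rw [shearAinv, Matrix.det_diagonal, ← Finset.mul_prod_erase _ _ (Finset.mem_univ 𝔡),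
    if_pos rfl, Finset.prod_congr rfl fun i hi => if_neg (Finset.ne_of_mem_erase hi),
    Finset.prod_const, Finset.card_erase_of_mem (Finset.mem_univ 𝔡), Finset.card_univ,
    Fintype.card_fin, show (4 : ℝ) = 2 ^ (2 : ℤ) by norm_num, ← zpow_mul, ← zpow_natCast,
    ← zpow_mul, ← zpow_add₀ two_ne_zero, Nat.cast_sub 𝔡.pos]
  ring_nf

theorem cubeVol_pos (P : Index d) : 0 < cubeVol P := by
  unfold cubeVol; positivity

noncomputable def shearMatrix (P : Index d) : Matrix (Fin d) (Fin d) ℝ :=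
  shearAinv d P.dir P.j * shearB d P.dir fun i => -P.l i

theorem det_shearMatrix (P : Index d) : (shearMatrix P).det = cubeVol P := by
  rw [shearMatrix, Matrix.det_mul, det_shearAinv, det_shearB, mul_one]
  rfl

theorem shearQ_eq_image (P : Index d) :
    shearQ P =
      (shearMatrix P).mulVec '' Set.univ.pi fun i => Set.Ico (P.k i : ℝ) (P.k i + 1) := by
  ext x
  simp [shearQ, shearMatrix, Set.mem_pi]

theorem measurableSet_shearQ (P : Index d) : MeasurableSet (shearQ P) := by
  have hinj : Function.Injective (shearMatrix P).mulVec := by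
    rw [Matrix.mulVec_injective_iff_isUnit, Matrix.isUnit_iff_isUnit_det, det_shearMatrix]
    exact (cubeVol_pos P).ne'.isUnit
  rw [shearQ_eq_image]
  exact (MeasurableSet.univ_pi fun _ => measurableSet_Ico).image_of_continuousOn_injOn
    (Matrix.mulVecLin (shearMatrix P)).continuous_of_finiteDimensional.continuousOn
    hinj.injOn

theorem volume_shearQ (P : Index d) : volume (shearQ P) = ENNReal.ofReal (cubeVol P) := by
  rw [shearQ_eq_image, ← Matrix.coe_mulVecLin, Measure.addHaar_image_linearMap,
    ← Matrix.toLin'_apply', LinearMap.det_toLin', det_shearMatrix, Real.volume_pi_Ico]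
  simp [abs_of_pos (cubeVol_pos P)]

theorem tlNorm_eq_of_forall_ne {P : Index d} {c : Index d → ℂ} (hc : ∀ P' ≠ P, c P' = 0)
    (s : ℝ) {p : ℝ} (hp : 0 < p) {q : ℝ≥0∞} (hq : q ≠ 0) :
    tlNorm s p q c = ENNReal.ofReal (cubeVol P ^ (-s - 1 / 2 + 1 / p)) * ‖c P‖₊ := by
  set A : ℝ≥0∞ := ENNReal.ofReal (cubeVol P ^ (-s - 1 / 2)) * ‖c P‖₊
  have hterm : ∀ P' ≠ P, ∀ x, ENNReal.ofReal (cubeVol P' ^ (-s - 1 / 2)) * ‖c P'‖₊ *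
      (shearQ P').indicator (fun _ => (1 : ℝ≥0∞)) x = 0 := fun P' hP' x => by simp [hc P' hP']
  have hinner : ∀ x, (if q = ∞ then
      ⨆ P', ENNReal.ofReal (cubeVol P' ^ (-s - 1 / 2)) * ‖c P'‖₊ *
        (shearQ P').indicator (fun _ => (1 : ℝ≥0∞)) x
    else (∑' P', (ENNReal.ofReal (cubeVol P' ^ (-s - 1 / 2)) * ‖c P'‖₊ *
        (shearQ P').indicator (fun _ => (1 : ℝ≥0∞)) x) ^ q.toReal) ^ (1 / q.toReal)) =
      A * (shearQ P).indicator (fun _ => 1) x := fun x => by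
    split_ifs with hq'
    · refine le_antisymm (iSup_le fun P' => ?_) (le_iSup_of_le P le_rfl)
      by_cases hP' : P' = P
      · rw [hP']
      · rw [hterm P' hP']; exact zero_le
    · have hq0 : 0 < q.toReal := ENNReal.toReal_pos hq hq'
      rw [tsum_eq_single P fun P' hP' => by rw [hterm P' hP', ENNReal.zero_rpow_of_pos hq0],
        ← ENNReal.rpow_mul, mul_one_div_cancel hq0.ne', ENNReal.rpow_one]
  have hpow : ∀ x, (A * (shearQ P).indicator (fun _ => 1) x) ^ p =
      (shearQ P).indicator (fun _ => A ^ p) x := fun x => by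
    by_cases hx : x ∈ shearQ P <;> simp [hx, ENNReal.zero_rpow_of_pos hp]
  simp only [tlNorm, hinner, hpow]
  rw [lintegral_indicator_const (measurableSet_shearQ P), volume_shearQ,
    ENNReal.mul_rpow_of_nonneg _ _ (one_div_pos.2 hp).le, ← ENNReal.rpow_mul,
    mul_one_div_cancel hp.ne', ENNReal.rpow_one, ENNReal.ofReal_rpow_of_pos (cubeVol_pos P),
    mul_right_comm, ← ENNReal.ofReal_mul (Real.rpow_nonneg (cubeVol_pos P).le _),
    ← Real.rpow_add (cubeVol_pos P)]

theorem tlNorm_indicator_singleton_rpow (P : Index d) (E s : ℝ) {p : ℝ} (hp : 0 < p)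
    {q : ℝ≥0∞} (hq : q ≠ 0) :
    tlNorm s p q (Set.indicator (({P} : Finset (Index d)) : Set (Index d))
        fun P => ((cubeVol P ^ E : ℝ) : ℂ)) =
      ENNReal.ofReal (cubeVol P ^ (E - s - 1 / 2 + 1 / p)) := by
  have hE := Real.rpow_pos_of_pos (cubeVol_pos P) E
  rw [tlNorm_eq_of_forall_ne (P := P) (fun P' hP' => by simp [hP']) s hp hq,
    Finset.coe_singleton, Set.indicator_of_mem (Set.mem_singleton P), ← enorm_eq_nnnorm,
    ← ofReal_norm, Complex.norm_real, Real.norm_of_nonneg hE.le,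
    ← ENNReal.ofReal_mul (Real.rpow_nonneg (cubeVol_pos P).le _), ← Real.rpow_add (cubeVol_pos P)]
  ring_nf

theorem nu_singleton (β : ℝ) (P : Index d) :
    nu β {P} = ENNReal.ofReal (cubeVol P ^ β) :=
  tsum_singleton P fun P => ENNReal.ofReal (cubeVol P ^ β)

theorem nu_singleton_rpow_inv (β : ℝ) (P : Index d) {p : ℝ} :
    nu β (({P} : Finset (Index d)) : Set (Index d)) ^ (1 / p) =
      ENNReal.ofReal (cubeVol P ^ (β / p)) := by
  rw [Finset.coe_singleton, nu_singleton, ENNReal.ofReal_rpow_of_pos (Real.rpow_pos_of_pos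
    (cubeVol_pos P) β), ← Real.rpow_mul (cubeVol_pos P).le, mul_one_div]

def Index.ofScale (hd : 0 < d) (j : ℕ) : Index d :=
  ⟨⟨0, hd⟩, j, 0, 0, fun _ => by simp⟩

theorem tendsto_cubeVol_ofScale (hd : 0 < d) :
    Tendsto (fun j => cubeVol (Index.ofScale hd j)) atTop (𝓝 0) := by
  have h : ∀ j, cubeVol (Index.ofScale hd j) = (((2 : ℝ) ^ (d + 1))⁻¹) ^ j := fun j => by
    rw [cubeVol, inv_pow, ← pow_mul, ← zpow_natCast, ← zpow_neg]
    push_cast [Index.ofScale]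
    ring_nf
  simp only [h]
  exact tendsto_pow_atTop_nhds_zero_of_lt_one (by positivity)
    (inv_lt_one_of_one_lt₀ (one_lt_pow₀ one_lt_two (Nat.succ_ne_zero d)))

end Shear

theorem tl_democracy_converse_general (d : ℕ) (hd : 2 ≤ d) (s₁ s₂ p₁ p₂ : ℝ)
    (hp₁ : 0 < p₁) (q₁ : ℝ≥0∞) (hq₁ : 0 < q₁) (α : ℝ) :
    ((∃ C' : ℝ, 0 < C' ∧ ∀ Γ : Finset (Shear.Index d),
        Shear.tlNorm s₁ p₁ q₁
            (Set.indicator (↑Γ : Set (Shear.Index d))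
              fun P => ((Shear.cubeVol P ^ (s₂ - 1 / p₂ + 1 / 2) : ℝ) : ℂ)) ≤
          ENNReal.ofReal C' *
            Shear.nu (α - p₁ * ((d : ℝ) - 1) / (q₁.toReal * ((d : ℝ) + 1)))
              (↑Γ : Set (Shear.Index d)) ^ (1 / p₁)) →
      α ≤ p₁ * (s₂ - 1 / p₂ - s₁ + 1 / p₁)
            + p₁ * ((d : ℝ) - 1) / (q₁.toReal * ((d : ℝ) + 1))) ∧
    ((∃ C : ℝ, 0 < C ∧ ∀ Γ : Finset (Shear.Index d),
        ENNReal.ofReal C *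
            Shear.nu (α + ((d : ℝ) - 1) / ((d : ℝ) + 1)) (↑Γ : Set (Shear.Index d))
              ^ (1 / p₁) ≤
          Shear.tlNorm s₁ p₁ q₁
            (Set.indicator (↑Γ : Set (Shear.Index d))
              fun P => ((Shear.cubeVol P ^ (s₂ - 1 / p₂ + 1 / 2) : ℝ) : ℂ))) →
      p₁ * (s₂ - 1 / p₂ - s₁ + 1 / p₁) - ((d : ℝ) - 1) / ((d : ℝ) + 1) ≤ α) := by
  have hd0 : 0 < d := by omega
  have hx0 : ∀ j, 0 < Shear.cubeVol (Shear.Index.ofScale hd0 j) := fun j => Shear.cubeVol_pos _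
  have htest : ∀ j, Shear.tlNorm s₁ p₁ q₁
      (Set.indicator
        (↑({Shear.Index.ofScale hd0 j} : Finset (Shear.Index d)) : Set (Shear.Index d))
        fun P => ((Shear.cubeVol P ^ (s₂ - 1 / p₂ + 1 / 2) : ℝ) : ℂ)) =
      ENNReal.ofReal
        (Shear.cubeVol (Shear.Index.ofScale hd0 j) ^ (s₂ - 1 / p₂ - s₁ + 1 / p₁)) :=
    fun j => by
      rw [Shear.tlNorm_indicator_singleton_rpow _ _ _ hp₁ hq₁.ne']
      congr 2
      ring
  have hmul : ∀ β : ℝ, p₁ * (β / p₁) = β := fun β => mul_div_cancel₀ β hp₁.ne'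
  constructor
  · rintro ⟨C', hC', h⟩
    have key := le_of_forall_rpow_le_mul_rpow hx0 (Shear.tendsto_cubeVol_ofScale hd0)
      fun j => by
      have hj := h {Shear.Index.ofScale hd0 j}
      rwa [htest, Shear.nu_singleton_rpow_inv, ← ENNReal.ofReal_mul hC'.le,
        ENNReal.ofReal_le_ofReal_iff (mul_nonneg hC'.le (Real.rpow_nonneg (hx0 j).le _))] at hj
    have := mul_le_mul_of_nonneg_left key hp₁.le
    linarith [hmul (α - p₁ * ((d : ℝ) - 1) / (q₁.toReal * ((d : ℝ) + 1)))]
  · rintro ⟨C, hC, h⟩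
    have key := le_of_forall_rpow_le_mul_rpow hx0 (Shear.tendsto_cubeVol_ofScale hd0)
      (C := C⁻¹) fun j => by
      have hj := h {Shear.Index.ofScale hd0 j}
      rw [htest, Shear.nu_singleton_rpow_inv, ← ENNReal.ofReal_mul hC.le,
        ENNReal.ofReal_le_ofReal_iff (Real.rpow_nonneg (hx0 j).le _)] at hj
      exact (le_inv_mul_iff₀ hC).2 hj
    have := mul_le_mul_of_nonneg_left key hp₁.le
    linarith [hmul (α + ((d : ℝ) - 1) / ((d : ℝ) + 1))]

/-- Converse part of Theorem 3.2: necessary bounds on the exponent `α` for the upper and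
lower democracy inequalities in `f^{s₁,q₁}_{p₁}(AB)` to hold over all finite `Γ ⊂ 𝒬_AB`. -/
theorem tl_democracy_converse (d : ℕ) (hd : 2 ≤ d) (s₁ s₂ p₁ p₂ : ℝ)
    (hp₁ : 0 < p₁) (hp₂ : 0 < p₂) (q₁ : ℝ≥0∞) (hq₁ : 0 < q₁) (α : ℝ) :
    ((∃ C' : ℝ, 0 < C' ∧ ∀ Γ : Finset (Shear.Index d),
        Shear.tlNorm s₁ p₁ q₁
            (Set.indicator (↑Γ : Set (Shear.Index d))
              fun P => ((Shear.cubeVol P ^ (s₂ - 1 / p₂ + 1 / 2) : ℝ) : ℂ)) ≤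
          ENNReal.ofReal C' *
            Shear.nu (α - p₁ * ((d : ℝ) - 1) / (q₁.toReal * ((d : ℝ) + 1)))
              (↑Γ : Set (Shear.Index d)) ^ (1 / p₁)) →
      α ≤ p₁ * (s₂ - 1 / p₂ - s₁ + 1 / p₁)
            + p₁ * ((d : ℝ) - 1) / (q₁.toReal * ((d : ℝ) + 1))) ∧
    ((∃ C : ℝ, 0 < C ∧ ∀ Γ : Finset (Shear.Index d),
        ENNReal.ofReal C *
            Shear.nu (α + ((d : ℝ) - 1) / ((d : ℝ) + 1)) (↑Γ : Set (Shear.Index d))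
              ^ (1 / p₁) ≤
          Shear.tlNorm s₁ p₁ q₁
            (Set.indicator (↑Γ : Set (Shear.Index d))
              fun P => ((Shear.cubeVol P ^ (s₂ - 1 / p₂ + 1 / 2) : ℝ) : ℂ))) →
      p₁ * (s₂ - 1 / p₂ - s₁ + 1 / p₁) - ((d : ℝ) - 1) / ((d : ℝ) + 1) ≤ α) :=
  tl_democracy_converse_general d hd s₁ s₂ p₁ p₂ hp₁ q₁ hq₁ α
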